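/- Fix a linear order V_c over C with c on top and let V_b be obtained from V_c by swapping the positions of c and b (b ≠ c). Let C' be the set of alternatives strictly between c and b in V_c (i.e., ranked below c and above b). Then for any profile P, Kendall(P,V_b) − Kendall(P,V_c) = Σ_{a∈C'} [w_P(a,b) − w_P(a,c)] + w_P(c,b), where w_P(x,y) = #{votes with x≻y} − #{votes with y≻x}. -/
import Mathlib


open Finset

/-- `a` is preferred to `b` in the linear order `V` (positions: 0 = top). -/
def prefers {m : ℕ} (V : Equiv.Perm (Fin m)) (a b : Fin m) : Prop :=
  V.symm a < V.symm b

instance {m : ℕ} (V : Equiv.Perm (Fin m)) (a b : Fin m) : Decidable (prefers V a b) :=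
  inferInstanceAs (Decidable (_ < _))

/-- Kendall-tau distance between two linear orders. -/
def kendall {m : ℕ} (V W : Equiv.Perm (Fin m)) : ℕ :=
  (Finset.univ.filter (fun p : Fin m × Fin m =>
    p.1 < p.2 ∧ ¬ (prefers V p.1 p.2 ↔ prefers W p.1 p.2))).card

/-- Total Kendall-tau distance between a profile and a linear order. -/
def kendallP {m : ℕ} (P : Multiset (Equiv.Perm (Fin m))) (W : Equiv.Perm (Fin m)) : ℕ :=
  (P.map (fun V => kendall V W)).sum

/-- Weighted-majority-graph weight `w_P(a,b)`. -/
def wP {m : ℕ} (P : Multiset (Equiv.Perm (Fin m))) (a b : Fin m) : ℤ :=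
  ((P.filter (fun V => prefers V a b)).card : ℤ)
    - ((P.filter (fun V => prefers V b a)).card : ℤ)

lemma prefers_ne {m : ℕ} {V : Equiv.Perm (Fin m)} {x y : Fin m} (h : prefers V x y) : x ≠ y := by
  intro he; subst he; exact lt_irrefl _ h

lemma not_prefers {m : ℕ} (V : Equiv.Perm (Fin m)) {x y : Fin m} (h : x ≠ y) :
    ¬ prefers V x y ↔ prefers V y x := by
  unfold prefers
  have hne : V.symm y ≠ V.symm x := fun hh => h (V.symm.injective hh).symm
  constructor
  · intro hn; exact lt_of_le_of_ne (le_of_not_gt hn) hne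
  · intro h' hn; exact absurd h' (lt_asymm hn)

lemma prefers_irrefl {m : ℕ} (V : Equiv.Perm (Fin m)) (x : Fin m) : ¬ prefers V x x :=
  lt_irrefl _

lemma kendall_eq {m : ℕ} (V W : Equiv.Perm (Fin m)) :
    kendall V W = (univ.filter (fun p : Fin m × Fin m =>
      prefers V p.1 p.2 ∧ prefers W p.2 p.1)).card := by
  unfold kendall
  apply Finset.card_bij' (fun p _ => if prefers V p.1 p.2 then p else p.swap)
    (fun p _ => if p.1 < p.2 then p else p.swap)
  · intro p hp
    simp only [mem_filter, mem_univ, true_and] at hp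
    by_cases hv : prefers V p.1 p.2
    · simp [hv, hp.1]
    · simp [hv, not_lt_of_gt hp.1]
  · intro p hp
    simp only [mem_filter, mem_univ, true_and] at hp
    have hnv : ¬ prefers V p.2 p.1 := fun h => absurd hp.1 (lt_asymm h)
    by_cases hlt : p.1 < p.2
    · simp [hlt, hp.1]
    · simp [hlt, hnv]
  · intro p hp
    simp only [mem_filter, mem_univ, true_and] at hp ⊢
    obtain ⟨hlt, hdis⟩ := hp
    have hne : p.1 ≠ p.2 := ne_of_lt hlt
    by_cases hv : prefers V p.1 p.2
    · have hw : ¬ prefers W p.1 p.2 := fun hw => hdis ⟨fun _ => hw, fun _ => hv⟩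
      simp [hv, (not_prefers W hne).mp hw]
    · have hw : prefers W p.1 p.2 := by
        by_contra hw
        exact hdis ⟨fun h => absurd h hv, fun h => absurd h hw⟩
      simp [hv, (not_prefers V hne).mp hv, hw]
  · intro p hp
    simp only [mem_filter, mem_univ, true_and] at hp ⊢
    obtain ⟨hv, hw⟩ := hp
    have hne : p.1 ≠ p.2 := prefers_ne hv
    have hnw : ¬ prefers W p.1 p.2 := (not_prefers W hne).mpr hw
    by_cases hlt : p.1 < p.2
    · refine ⟨by simp [hlt], ?_⟩
      simp only [hlt, if_true]
      exact fun hiff => hnw (hiff.mp hv)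
    · have hlt2 : p.2 < p.1 := lt_of_le_of_ne (le_of_not_gt hlt) hne.symm
      refine ⟨by simpa [hlt], ?_⟩
      simp only [hlt, if_false]
      have hnv : ¬ prefers V p.2 p.1 := fun h => absurd hv (lt_asymm h)
      exact fun hiff => hnv (hiff.mpr hw)


/-- single-voter weight -/
def w1 {m : ℕ} (V : Equiv.Perm (Fin m)) (a b : Fin m) : ℤ :=
  (if prefers V a b then 1 else 0) - (if prefers V b a then 1 else 0)

def fAux {m : ℕ} (V Vc : Equiv.Perm (Fin m)) (c b : Fin m) (x y : Fin m) : ℤ :=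
  (if prefers V (Equiv.swap c b x) (Equiv.swap c b y) ∧ Vc.symm y < Vc.symm x then 1 else 0)
  - (if prefers V x y ∧ Vc.symm y < Vc.symm x then 1 else 0)

lemma card_filter_int {α : Type*} [Fintype α] (q : α → Prop) [DecidablePred q] :
    (((univ : Finset α).filter q).card : ℤ) = ∑ a, if q a then (1:ℤ) else 0 := by
  rw [Finset.card_filter]
  push_cast
  rfl

lemma kendall_single {m : ℕ} (V Vc : Equiv.Perm (Fin m)) (c b : Fin m) (hcb : b ≠ c)
    (htop : (Vc.symm c : ℕ) = 0) :
    (kendall V (Equiv.swap c b * Vc) : ℤ) - (kendall V Vc : ℤ)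
      = (∑ a ∈ univ.filter (fun a : Fin m =>
            Vc.symm c < Vc.symm a ∧ Vc.symm a < Vc.symm b),
          (w1 V a b - w1 V a c)) + w1 V c b := by
  set σ := Equiv.swap c b with hσ
  have hsymm : ∀ u, (σ * Vc).symm u = Vc.symm (σ u) := by
    intro u
    simp [Equiv.Perm.mul_def, hσ]
  have hpref : ∀ x y, prefers (σ * Vc) x y ↔ Vc.symm (σ x) < Vc.symm (σ y) := by
    intro x y; unfold prefers; rw [hsymm, hsymm]
  -- positional basics
  have hposc : ∀ y : Fin m, ¬ Vc.symm y < Vc.symm c := by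
    intro y h; rw [Fin.lt_def, htop] at h; omega
  have hclt : ∀ a : Fin m, a ≠ c → Vc.symm c < Vc.symm a := by
    intro a ha
    have h1 : (Vc.symm a : ℕ) ≠ (Vc.symm c : ℕ) := by
      intro h; exact ha (Vc.symm.injective (Fin.ext h))
    rw [Fin.lt_def, htop]; omega
  have hblt : Vc.symm c < Vc.symm b := hclt b hcb
  -- LHS as a double sum of fAux
  have h1 : (kendall V (σ * Vc) : ℤ)
      = ∑ p : Fin m × Fin m,
          (if prefers V (σ p.1) (σ p.2) ∧ Vc.symm p.2 < Vc.symm p.1 then (1:ℤ) else 0) := by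
    rw [kendall_eq, card_filter_int]
    rw [Fintype.sum_equiv (σ.prodCongr σ)
      (fun p : Fin m × Fin m => if prefers V p.1 p.2 ∧ prefers (σ * Vc) p.2 p.1 then (1:ℤ) else 0)
      (fun p : Fin m × Fin m => if prefers V (σ p.1) (σ p.2) ∧ Vc.symm p.2 < Vc.symm p.1 then (1:ℤ) else 0)
      ?_]
    intro p
    simp only [Equiv.prodCongr_apply, Prod.map_fst, Prod.map_snd]
    congr 1
    rw [hpref]
    simp [hσ, Equiv.swap_apply_self]
  have h2 : (kendall V Vc : ℤ)
      = ∑ p : Fin m × Fin m,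
          (if prefers V p.1 p.2 ∧ Vc.symm p.2 < Vc.symm p.1 then (1:ℤ) else 0) := by
    rw [kendall_eq, card_filter_int]; rfl
  have hLHS : (kendall V (σ * Vc) : ℤ) - (kendall V Vc : ℤ)
      = ∑ x : Fin m, ∑ y : Fin m, fAux V Vc c b x y := by
    rw [h1, h2, ← Finset.sum_sub_distrib]
    rw [← Fintype.sum_prod_type (f := fun p : Fin m × Fin m => fAux V Vc c b p.1 p.2)]
    rfl
  rw [hLHS]
  -- row c vanishes
  have hrowc : ∀ y, fAux V Vc c b c y = 0 := by
    intro y; simp [fAux, hposc y]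
  -- restructure the double sum
  have hsplit : ∀ x : Fin m, (∑ y : Fin m, fAux V Vc c b x y)
      = (fAux V Vc c b x c + fAux V Vc c b x b)
        + ∑ y ∈ univ.filter (fun y => ¬(y = c ∨ y = b)), fAux V Vc c b x y := by
    intro x
    rw [← Finset.sum_filter_add_sum_filter_not univ (fun y => y = c ∨ y = b)]
    congr 1
    have hset : univ.filter (fun y : Fin m => y = c ∨ y = b) = {c, b} := by
      ext y; simp [mem_filter, mem_insert]
    rw [hset, Finset.sum_pair (Ne.symm hcb)]
  have hcols : ∀ y ∈ univ.filter (fun y : Fin m => ¬(y = c ∨ y = b)),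
      (∑ x : Fin m, fAux V Vc c b x y) = fAux V Vc c b b y := by
    intro y hy
    simp only [mem_filter, mem_univ, true_and, not_or] at hy
    apply Finset.sum_eq_single b
    · intro x _ hxb
      rcases eq_or_ne x c with hxc | hxc
      · rw [hxc]; exact hrowc y
      · simp [fAux, Equiv.swap_apply_of_ne_of_ne hxc hxb,
          Equiv.swap_apply_of_ne_of_ne hy.1 hy.2, hσ]
    · intro h; exact absurd (mem_univ b) h
  have htotal : (∑ x : Fin m, ∑ y : Fin m, fAux V Vc c b x y)
      = ∑ x : Fin m, ((fAux V Vc c b x c + fAux V Vc c b x b)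
          + if ¬(x = c ∨ x = b) then fAux V Vc c b b x else 0) := by
    calc (∑ x : Fin m, ∑ y : Fin m, fAux V Vc c b x y)
        = ∑ x : Fin m, ((fAux V Vc c b x c + fAux V Vc c b x b)
            + ∑ y ∈ univ.filter (fun y => ¬(y = c ∨ y = b)), fAux V Vc c b x y) := by
          exact Finset.sum_congr rfl fun x _ => hsplit x
      _ = (∑ x : Fin m, (fAux V Vc c b x c + fAux V Vc c b x b))
            + ∑ x : Fin m, ∑ y ∈ univ.filter (fun y => ¬(y = c ∨ y = b)), fAux V Vc c b x y := by
          rw [Finset.sum_add_distrib]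
      _ = (∑ x : Fin m, (fAux V Vc c b x c + fAux V Vc c b x b))
            + ∑ y ∈ univ.filter (fun y => ¬(y = c ∨ y = b)), ∑ x : Fin m, fAux V Vc c b x y := by
          rw [Finset.sum_comm]
      _ = (∑ x : Fin m, (fAux V Vc c b x c + fAux V Vc c b x b))
            + ∑ y ∈ univ.filter (fun y => ¬(y = c ∨ y = b)), fAux V Vc c b b y := by
          rw [Finset.sum_congr rfl hcols]
      _ = (∑ x : Fin m, (fAux V Vc c b x c + fAux V Vc c b x b))
            + ∑ y : Fin m, if ¬(y = c ∨ y = b) then fAux V Vc c b b y else 0 := by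
          rw [Finset.sum_filter]
      _ = _ := by rw [← Finset.sum_add_distrib]
  rw [htotal]
  -- RHS restructure
  have hRHS : (∑ a ∈ univ.filter (fun a : Fin m =>
        Vc.symm c < Vc.symm a ∧ Vc.symm a < Vc.symm b), (w1 V a b - w1 V a c)) + w1 V c b
      = ∑ x : Fin m, ((if Vc.symm c < Vc.symm x ∧ Vc.symm x < Vc.symm b
            then w1 V x b - w1 V x c else 0)
          + (if x = b then w1 V c b else 0)) := by
    rw [Finset.sum_add_distrib, Finset.sum_ite_eq' univ b (fun _ => w1 V c b)]
    simp only [mem_univ, if_true]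
    congr 1
    rw [Finset.sum_filter]
  rw [hRHS]
  apply Finset.sum_congr rfl
  intro x _
  by_cases hxc : x = c
  · subst hxc
    simp [hrowc, lt_irrefl, Ne.symm hcb]
  · by_cases hxb : x = b
    · subst hxb
      have e1 : fAux V Vc c x x c = w1 V c x := by
        simp [fAux, w1, Equiv.swap_apply_left, Equiv.swap_apply_right, hblt]
      have e2 : fAux V Vc c x x x = 0 := by
        simp [fAux, prefers_irrefl]
      simp [e1, e2, lt_irrefl]
    · -- x ∉ {c, b}
      have hσx : Equiv.swap c b x = x := Equiv.swap_apply_of_ne_of_ne hxc hxb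
      have hcx : Vc.symm c < Vc.symm x := hclt x hxc
      have hxbne : (Vc.symm x : ℕ) ≠ (Vc.symm b : ℕ) := by
        intro h; exact hxb (Vc.symm.injective (Fin.ext h))
      have e1 : fAux V Vc c b x c
          = (if prefers V x b then (1:ℤ) else 0) - (if prefers V x c then (1:ℤ) else 0) := by
        simp [fAux, hσx, Equiv.swap_apply_left, hcx]
      by_cases hpos : Vc.symm x < Vc.symm b
      · have hnpos : ¬ Vc.symm b < Vc.symm x := lt_asymm hpos
        have e2 : fAux V Vc c b x b = 0 := by
          simp [fAux, hσx, Equiv.swap_apply_right, hnpos]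
        have e3 : fAux V Vc c b b x
            = (if prefers V c x then (1:ℤ) else 0) - (if prefers V b x then (1:ℤ) else 0) := by
          simp [fAux, hσx, Equiv.swap_apply_right, hpos]
        rw [e1, e2, e3, if_pos (not_or_intro hxc hxb), if_pos (⟨hcx, hpos⟩ : _ ∧ _),
          if_neg hxb]
        simp only [w1]
        ring
      · have hpos2 : Vc.symm b < Vc.symm x := by
          rw [Fin.lt_def]; rw [Fin.lt_def] at hpos; omega
        have e2 : fAux V Vc c b x b
            = (if prefers V x c then (1:ℤ) else 0) - (if prefers V x b then (1:ℤ) else 0) := by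
          simp [fAux, hσx, Equiv.swap_apply_right, hpos2]
        have e3 : fAux V Vc c b b x = 0 := by
          simp [fAux, hσx, Equiv.swap_apply_right, hpos]
        rw [e1, e2, e3, if_pos (not_or_intro hxc hxb), if_neg hxb,
          if_neg (show ¬((Vc.symm c < Vc.symm x) ∧ (Vc.symm x < Vc.symm b)) from
            fun h => hpos h.2)]
        ring

lemma wP_cons {m : ℕ} (V : Equiv.Perm (Fin m)) (P : Multiset (Equiv.Perm (Fin m)))
    (a b : Fin m) : wP (V ::ₘ P) a b = w1 V a b + wP P a b := by
  unfold wP w1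
  by_cases h1 : prefers V a b <;> by_cases h2 : prefers V b a <;>
    simp [Multiset.filter_cons, h1, h2] <;> push_cast <;> ring

lemma kendallP_cons {m : ℕ} (V : Equiv.Perm (Fin m)) (P : Multiset (Equiv.Perm (Fin m)))
    (W : Equiv.Perm (Fin m)) : kendallP (V ::ₘ P) W = kendall V W + kendallP P W := by
  simp [kendallP]

/-- swapping the top alternative `c` with `b` in `V_c` changes the total
Kendall-tau distance to the profile by `Σ_{a ∈ C'} [w_P(a,b) − w_P(a,c)] + w_P(c,b)`,
where `C'` is the set of alternatives strictly between `c` and `b` in `V_c`. -/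
theorem kendall_swap_top_diff {m : ℕ} (P : Multiset (Equiv.Perm (Fin m)))
    (Vc : Equiv.Perm (Fin m)) (c b : Fin m) (hcb : b ≠ c)
    (htop : (Vc.symm c : ℕ) = 0) :
    (kendallP P (Equiv.swap c b * Vc) : ℤ) - (kendallP P Vc : ℤ)
      = (∑ a ∈ Finset.univ.filter (fun a : Fin m =>
            Vc.symm c < Vc.symm a ∧ Vc.symm a < Vc.symm b),
          (wP P a b - wP P a c)) + wP P c b := by
  induction P using Multiset.induction_on with
  | empty => simp [kendallP, wP]
  | cons V P ih =>
    rw [kendallP_cons, kendallP_cons]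
    push_cast
    simp only [wP_cons]
    have hsum : ∑ a ∈ Finset.univ.filter (fun a : Fin m =>
          Vc.symm c < Vc.symm a ∧ Vc.symm a < Vc.symm b),
        (w1 V a b + wP P a b - (w1 V a c + wP P a c))
      = (∑ a ∈ Finset.univ.filter (fun a : Fin m =>
          Vc.symm c < Vc.symm a ∧ Vc.symm a < Vc.symm b), (w1 V a b - w1 V a c))
        + ∑ a ∈ Finset.univ.filter (fun a : Fin m =>
          Vc.symm c < Vc.symm a ∧ Vc.symm a < Vc.symm b), (wP P a b - wP P a c) := by
      rw [← Finset.sum_add_distrib]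
      exact Finset.sum_congr rfl fun a _ => by ring
    rw [hsum]
    have hone := kendall_single V Vc c b hcb htop
    linarith [hone, ih]
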